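/- arXiv:2311.07281 — 4 statements merged into one kernel-verified Lean document; each statement's English description precedes it below -/
import Mathlib

section
/- Suppose a discrete-time optimal control problem with stage cost ℓ admits a storage function λ : ℕ × L^n(𝒳) → ℝ bounded below by M, a stationary pair (X^s, U^s) with constant stage cost ℓ(X^s,U^s), and a function α ∈ 𝒦_∞ such that the strict dissipation inequality ℓ(X(k),U(k)) − ℓ(X^s,U^s) + λ(k,X(k)) − λ(k+1,X(k+1)) ≥ α(E[‖X(k) − X^s(k)‖^r]) holds along every admissible trajectory. Then for every trajectory of length N with J_N(X_0,U) ≤ δ + N·ℓ(X^s,U^s), and every ε > 0, the number of times k ∈ {0,…,N−1} with E[‖X(k) − X^s(k)‖^r] ≤ ε is at least N − (δ + λ(0,X_0) − M)/α(ε). -/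
open MeasureTheory
open scoped Classical

noncomputable section

/-- Class `𝒦_∞` of comparison functions. -/
def IsKInfty (α : ℝ → ℝ) : Prop :=
  ContinuousOn α (Set.Ici 0) ∧ StrictMonoOn α (Set.Ici 0) ∧ α 0 = 0 ∧
    ∀ c : ℝ, ∃ x, 0 ≤ x ∧ c ≤ α x

/-- Strict `L^r` dissipativity implies the `L^r` turnpike counting estimate. -/
theorem strict_Lr_dissipativity_implies_Lr_turnpike
    {Ω 𝒳 𝒰 : Type*} [MeasurableSpace Ω] [NormedAddCommGroup 𝒳]
    (P : Measure Ω) [IsProbabilityMeasure P]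
    (ℓ : (Ω → 𝒳) → (Ω → 𝒰) → ℝ)            -- law-invariant stage cost
    (lam : ℕ → (Ω → 𝒳) → ℝ)                 -- storage function
    (M : ℝ) (hM : ∀ k X, M ≤ lam k X)        -- storage bounded below
    (Xs : ℕ → Ω → 𝒳) (ℓs : ℝ)               -- stationary process and its cost
    (r : ℝ) (hr : 1 ≤ r)
    (α : ℝ → ℝ) (hα : IsKInfty α)
    -- strict dissipation inequality along every admissible trajectory:
    (Adm : (ℕ → Ω → 𝒳) → (ℕ → Ω → 𝒰) → Prop)
    (hdiss : ∀ X U, Adm X U → ∀ k,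
      α (∫ ω, ‖X k ω - Xs k ω‖ ^ r ∂P)
        ≤ ℓ (X k) (U k) - ℓs + lam k (X k) - lam (k + 1) (X (k + 1))) :
    ∀ X U, Adm X U → ∀ (N : ℕ) (δ : ℝ), 0 < δ →
      (∑ k ∈ Finset.range N, ℓ (X k) (U k)) ≤ δ + N * ℓs →
      ∀ ε > (0 : ℝ),
        (N : ℝ) - (δ + lam 0 (X 0) - M) / α ε
          ≤ ((Finset.range N).filter
              (fun k => (∫ ω, ‖X k ω - Xs k ω‖ ^ r ∂P) ≤ ε)).card := by
  intro X U hAdm N δ hδ hJ ε hε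
  set b : ℕ → ℝ := fun k => ∫ ω, ‖X k ω - Xs k ω‖ ^ r ∂P with hb_def
  set a : ℕ → ℝ := fun k =>
    ℓ (X k) (U k) - ℓs + lam k (X k) - lam (k + 1) (X (k + 1)) with ha_def
  obtain ⟨-, hmono, h0, -⟩ := hα
  have hb0 : ∀ k, (0:ℝ) ≤ b k := fun k =>
    integral_nonneg fun ω => Real.rpow_nonneg (norm_nonneg _) r
  have hαb : ∀ k, 0 ≤ α (b k) := by
    intro k
    rcases eq_or_lt_of_le (hb0 k) with h | h
    · rw [← h, h0]
    · rw [← h0]; exact (hmono Set.self_mem_Ici (le_of_lt h) h).le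
  have ha0 : ∀ k, 0 ≤ a k := fun k => le_trans (hαb k) (hdiss X U hAdm k)
  have hαε : 0 < α ε := by
    rw [← h0]; exact hmono Set.self_mem_Ici (le_of_lt hε) hε
  have hsum : ∑ k ∈ Finset.range N, a k ≤ δ + lam 0 (X 0) - M := by
    have htel : ∑ k ∈ Finset.range N,
        (lam k (X k) - lam (k + 1) (X (k + 1))) = lam 0 (X 0) - lam N (X N) :=
      Finset.sum_range_sub' (fun k => lam k (X k)) N
    have heq : ∑ k ∈ Finset.range N, a k
        = (∑ k ∈ Finset.range N, (ℓ (X k) (U k) - ℓs))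
          + ∑ k ∈ Finset.range N, (lam k (X k) - lam (k + 1) (X (k + 1))) := by
      rw [← Finset.sum_add_distrib]
      refine Finset.sum_congr rfl fun k _ => ?_
      simp only [ha_def]; ring
    have hℓ : ∑ k ∈ Finset.range N, (ℓ (X k) (U k) - ℓs)
        = (∑ k ∈ Finset.range N, ℓ (X k) (U k)) - N * ℓs := by
      rw [Finset.sum_sub_distrib, Finset.sum_const, Finset.card_range,
        nsmul_eq_mul]
    rw [heq, hℓ, htel]
    have := hM N (X N)
    linarith
  set G := (Finset.range N).filter (fun k => b k ≤ ε) with hG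
  set B := (Finset.range N).filter (fun k => ¬ b k ≤ ε) with hB
  have hcard : G.card + B.card = N := by
    have := Finset.card_filter_add_card_filter_not
      (s := Finset.range N) (p := fun k => b k ≤ ε)
    simpa [hG, hB] using this
  have hBsum : (B.card : ℝ) * α ε ≤ ∑ k ∈ Finset.range N, a k := by
    calc (B.card : ℝ) * α ε = ∑ _k ∈ B, α ε := by
          rw [Finset.sum_const, nsmul_eq_mul]
      _ ≤ ∑ k ∈ B, a k := by
          refine Finset.sum_le_sum fun k hk => ?_
          have hbk : ε < b k := not_le.mp (Finset.mem_filter.mp hk).2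
          exact le_trans (hmono (le_of_lt hε) (hb0 k) hbk).le (hdiss X U hAdm k)
      _ ≤ ∑ k ∈ Finset.range N, a k :=
          Finset.sum_le_sum_of_subset_of_nonneg (Finset.filter_subset _ _)
            (fun k _ _ => ha0 k)
  have hBle : (B.card : ℝ) ≤ (δ + lam 0 (X 0) - M) / α ε := by
    rw [le_div_iff₀ hαε]; linarith
  have hN : (N : ℝ) = (G.card : ℝ) + (B.card : ℝ) := by exact_mod_cast hcard.symm
  linarith
end
end

section
/- If an optimal control problem has the L^r turnpike property with comparison function α₁ ∈ 𝒦_∞ and constant C, then it has the pathwise-in-probability turnpike property with constant C and comparison function α₂(ε) := α₁(ε^{r+1}): i.e., for any trajectory with J_N(X_0,U) ≤ δ + N·ℓ(X^s,U^s), and any ε > 0, the number of times k with ℙ(‖X(k) − X^s(k)‖ ≤ ε) ≥ 1 − ε is at least N − (δ + C)/α₁(ε^{r+1}). -/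
/-!
By Markov's inequality for `‖X k - Xs k‖ ^ r` at level `ε ^ r`, `E‖X k - Xs k‖ ^ r ≤ ε ^ (r + 1)`
forces `ℙ(‖X k - Xs k‖ > ε) ≤ ε`. Hence every time counted by the `L^r` estimate with
`η = ε ^ (r + 1)` is also counted by the in-probability estimate.
-/

open MeasureTheory
open scoped Classical

noncomputable section

section

variable {Ω E : Type*} [MeasurableSpace Ω] [NormedAddCommGroup E] {μ : Measure Ω}

theorem measureReal_norm_gt_le_of_integral_norm_pow_le [IsFiniteMeasure μ] {f : Ω → E} {r : ℕ}
    {ε δ : ℝ} (hε : 0 < ε) (hf : Integrable (fun ω => ‖f ω‖ ^ r) μ)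
    (h : ∫ ω, ‖f ω‖ ^ r ∂μ ≤ ε ^ r * δ) :
    μ.real {ω | ε < ‖f ω‖} ≤ δ := by
  have hsub : {ω | ε < ‖f ω‖} ⊆ {ω | ε ^ r ≤ ‖f ω‖ ^ r} := fun ω hω =>
    pow_le_pow_left₀ hε.le hω.le r
  have markov : ε ^ r * μ.real {ω | ε ^ r ≤ ‖f ω‖ ^ r} ≤ ∫ ω, ‖f ω‖ ^ r ∂μ :=
    mul_meas_ge_le_integral_of_nonneg (ae_of_all _ fun ω => by positivity) hf _
  calc μ.real {ω | ε < ‖f ω‖} ≤ μ.real {ω | ε ^ r ≤ ‖f ω‖ ^ r} := measureReal_mono hsub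
    _ ≤ δ := le_of_mul_le_mul_left (markov.trans h) (pow_pos hε r)

theorem ofReal_one_sub_le_measure_of_measureReal_compl_le [IsProbabilityMeasure μ] {s : Set Ω}
    {ε : ℝ} (h : μ.real sᶜ ≤ ε) : ENNReal.ofReal (1 - ε) ≤ μ s := by
  have hcover : 1 ≤ μ.real s + μ.real sᶜ := by
    calc (1 : ℝ) = μ.real (s ∪ sᶜ) := by rw [Set.union_compl_self, probReal_univ]
      _ ≤ μ.real s + μ.real sᶜ := measureReal_union_le _ _
  exact ENNReal.ofReal_le_of_le_toReal (by rw [← measureReal_def]; linarith)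

theorem ofReal_one_sub_le_measure_norm_le_of_integral_norm_pow_le [IsProbabilityMeasure μ]
    {f : Ω → E} {r : ℕ} {ε : ℝ} (hε : 0 < ε) (hf : Integrable (fun ω => ‖f ω‖ ^ r) μ)
    (h : ∫ ω, ‖f ω‖ ^ r ∂μ ≤ ε ^ (r + 1)) :
    ENNReal.ofReal (1 - ε) ≤ μ {ω | ‖f ω‖ ≤ ε} := by
  refine ofReal_one_sub_le_measure_of_measureReal_compl_le ?_
  simp only [Set.compl_ofPred, not_le]
  exact measureReal_norm_gt_le_of_integral_norm_pow_le hε hf (pow_succ ε r ▸ h)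

end

theorem Lr_turnpike_implies_pathwise_in_probability_turnpike_general
    {Ω 𝒳 : Type*} [MeasurableSpace Ω] [NormedAddCommGroup 𝒳]
    (P : Measure Ω) [IsProbabilityMeasure P]
    (r : ℕ)
    (α₁ : ℝ → ℝ)
    (C δ : ℝ)
    (N : ℕ)
    (X Xs : ℕ → Ω → 𝒳)
    (hInt : ∀ k, Integrable (fun ω => ‖X k ω - Xs k ω‖ ^ r) P)
    -- the `L^r` turnpike counting estimate along the trajectory:
    (hLr : ∀ η > (0 : ℝ),
      (N : ℝ) - (δ + C) / α₁ η
        ≤ ((Finset.range N).filter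
            (fun k => (∫ ω, ‖X k ω - Xs k ω‖ ^ r ∂P) ≤ η)).card) :
    ∀ ε > (0 : ℝ),
      (N : ℝ) - (δ + C) / α₁ (ε ^ (r + 1))
        ≤ ((Finset.range N).filter
            (fun k => ENNReal.ofReal (1 - ε) ≤ P {ω | ‖X k ω - Xs k ω‖ ≤ ε})).card := by
  intro ε hε
  refine (hLr _ (pow_pos hε _)).trans ?_
  gcongr with k
  exact ofReal_one_sub_le_measure_norm_le_of_integral_norm_pow_le hε (hInt k)

/-- `L^r` turnpike implies pathwise-in-probability turnpike with `α₂(ε) = α₁(ε^{r+1})`. -/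
theorem Lr_turnpike_implies_pathwise_in_probability_turnpike
    {Ω 𝒳 : Type*} [MeasurableSpace Ω] [NormedAddCommGroup 𝒳]
    (P : Measure Ω) [IsProbabilityMeasure P]
    (r : ℕ) (hr : 1 ≤ r)
    (α₁ : ℝ → ℝ) (hα₁ : IsKInfty α₁)
    (C δ : ℝ) (hC : 0 < C) (hδ : 0 < δ)
    (N : ℕ)
    (X Xs : ℕ → Ω → 𝒳)
    (hInt : ∀ k, Integrable (fun ω => ‖X k ω - Xs k ω‖ ^ r) P)
    -- the `L^r` turnpike counting estimate along the trajectory: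
    (hLr : ∀ η > (0 : ℝ),
      (N : ℝ) - (δ + C) / α₁ η
        ≤ ((Finset.range N).filter
            (fun k => (∫ ω, ‖X k ω - Xs k ω‖ ^ r ∂P) ≤ η)).card) :
    ∀ ε > (0 : ℝ),
      (N : ℝ) - (δ + C) / α₁ (ε ^ (r + 1))
        ≤ ((Finset.range N).filter
            (fun k => ENNReal.ofReal (1 - ε) ≤ P {ω | ‖X k ω - Xs k ω‖ ≤ ε})).card :=
  Lr_turnpike_implies_pathwise_in_probability_turnpike_general P r α₁ C δ N X Xs hInt hLr
end
end

section
/- Suppose the optimal control problem is distributionally dissipative at the stationary pair (ρ_X^s, π^s): there exists a storage function Λ bounded below such that ℓ(X, π(X)) − ℓ(X^s, π^s(X^s)) + Λ(P_X) − Λ(P_{X^+}) ≥ 0 for all admissible (X, π(X)) and X^s ∼ ρ_X^s. Then (ρ_X^s, π^s) minimizes the stage cost among all stationary pairs: for every stationary pair (ρ̃, π̃) with X̃ ∼ ρ̃ admissible, ℓ(X̃, π̃(X̃)) ≥ ℓ(X^s, π^s(X^s)). -/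
open MeasureTheory

noncomputable section

/-- Distributional dissipativity implies that the stationary pair minimizes the
stage cost among all admissible stationary pairs. -/
theorem dissipativity_implies_stationary_optimality
    {𝒳 𝒰 : Type*} [MeasurableSpace 𝒳]
    (T : Measure 𝒳 → (𝒳 → 𝒰) → Measure 𝒳)      -- transition operator on laws
    (ℓhat : Measure 𝒳 → (𝒳 → 𝒰) → ℝ)            -- law-invariant stage cost
    (Adm : Measure 𝒳 → (𝒳 → 𝒰) → Prop)           -- admissibility of a pair
    (Λ : Measure 𝒳 → ℝ) (M : ℝ) (hM : ∀ ρ, M ≤ Λ ρ)  -- storage bounded below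
    (ρs : Measure 𝒳) (πs : 𝒳 → 𝒰)
    (hstat : T ρs πs = ρs) (hadm : Adm ρs πs)
    -- dissipation inequality for all admissible pairs:
    (hdiss : ∀ ρ π, Adm ρ π → 0 ≤ ℓhat ρ π - ℓhat ρs πs + Λ ρ - Λ (T ρ π)) :
    ∀ ρt πt, Adm ρt πt → T ρt πt = ρt → ℓhat ρs πs ≤ ℓhat ρt πt := by
  intro ρt πt h1 h2
  have := hdiss ρt πt h1
  rw [h2] at this
  linarith
end
end

section
/- If a trajectory satisfies the cost bound J_N(X_0, U) ≤ δ + N·ℓ^s and the pointwise bound ℓ(X(k),U(k)) − ℓ^s + λ(k,X(k)) − λ(k+1,X(k+1)) ≥ 0 for all k, where λ is bounded below by M, then the number of indices k ∈ {0,…,N−1} at which ℓ(X(k),U(k)) − ℓ^s + λ(k,X(k)) − λ(k+1,X(k+1)) > η is strictly less than (δ + λ(0,X_0) − M)/η, for every η > 0. -/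
open scoped Classical

noncomputable section

/-- Chebyshev-type counting bound for nonnegative rotated costs. -/
theorem rotated_cost_counting_bound
    (N : ℕ) (ℓk : ℕ → ℝ)            -- stage costs along the trajectory
    (lam : ℕ → ℝ)                   -- storage values along the trajectory
    (ℓs M δ : ℝ) (hδ : 0 < δ)
    (hM : ∀ k, M ≤ lam k)
    (hcost : (∑ k ∈ Finset.range N, ℓk k) ≤ δ + N * ℓs)
    (hpos : ∀ k, 0 ≤ ℓk k - ℓs + lam k - lam (k + 1)) :
    ∀ η > (0 : ℝ),
      (((Finset.range N).filter
          (fun k => η < ℓk k - ℓs + lam k - lam (k + 1))).card : ℝ)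
        < (δ + lam 0 - M) / η := by
  intro η hη
  set L : ℕ → ℝ := fun k => ℓk k - ℓs + lam k - lam (k + 1) with hL
  have htel : ∀ n, ∑ k ∈ Finset.range n, (lam k - lam (k + 1)) = lam 0 - lam n := by
    intro n
    induction n with
    | zero => simp
    | succ n ih => rw [Finset.sum_range_succ, ih]; ring
  have hsum : (∑ k ∈ Finset.range N, L k) ≤ δ + lam 0 - M := by
    have : (∑ k ∈ Finset.range N, L k)
        = (∑ k ∈ Finset.range N, ℓk k) - N * ℓs + (lam 0 - lam N) := by
      simp only [hL]
      rw [show (fun k => ℓk k - ℓs + lam k - lam (k + 1))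
          = fun k => (ℓk k - ℓs) + (lam k - lam (k + 1)) by funext k; ring]
      rw [Finset.sum_add_distrib, htel, Finset.sum_sub_distrib]
      simp [Finset.sum_const, mul_comm]
    rw [this]
    have := hM N
    linarith
  set S := (Finset.range N).filter (fun k => η < L k) with hS
  have hfs : (S.card : ℝ) * η ≤ ∑ k ∈ S, L k := by
    calc (S.card : ℝ) * η = ∑ _k ∈ S, η := by rw [Finset.sum_const, nsmul_eq_mul]
    _ ≤ ∑ k ∈ S, L k :=
        Finset.sum_le_sum (fun k hk => le_of_lt (Finset.mem_filter.mp hk).2)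
  have hsub : (∑ k ∈ S, L k) ≤ ∑ k ∈ Finset.range N, L k :=
    Finset.sum_le_sum_of_subset_of_nonneg (Finset.filter_subset _ _)
      (fun k _ _ => hpos k)
  by_cases hc : S.card = 0
  · rw [hc]
    push_cast
    apply div_pos _ hη
    have := hM 0
    linarith
  · have h1 : (1 : ℝ) ≤ S.card := by exact_mod_cast Nat.one_le_iff_ne_zero.mpr hc
    have hstrict : (S.card : ℝ) * η < ∑ k ∈ S, L k := by
      obtain ⟨k0, hk0⟩ := Finset.card_pos.mp (Nat.pos_of_ne_zero hc)
      have hk0' : η < L k0 := (Finset.mem_filter.mp hk0).2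
      have : (S.card : ℝ) * η = ∑ k ∈ S, η := by rw [Finset.sum_const, nsmul_eq_mul]
      rw [this]
      exact Finset.sum_lt_sum (fun k hk => le_of_lt (Finset.mem_filter.mp hk).2)
        ⟨k0, hk0, hk0'⟩
    rw [lt_div_iff₀ hη]
    calc (S.card : ℝ) * η < ∑ k ∈ S, L k := hstrict
    _ ≤ δ + lam 0 - M := le_trans hsub hsum
end
end
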